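/- arXiv:2306.03171 — 8 statements merged into one kernel-verified Lean document; each statement's English description precedes it below -/
import Mathlib

section
/- Let N ≥ 1, a : ZMod N → ℕ, and s : ZMod N, and define b : ZMod N → ℕ by b(r) = a(r − s). Then for every g : ZMod N, χ_b(g)^{d_g} = χ_a(g)^{d_g}, where d_g is the additive order of g. (Twisting a representation by a 1-dimensional representation does not change the refined symmetry-protected index data.) -/
/-- The character of the `ZMod N`-representation with multiplicity function `a`,
evaluated at the group element `g`: `χ_a(g) = ∑ r, a r * ζ^{(r*g).val}` where
`ζ = exp(2πi/N)`. -/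
noncomputable def chiChar (N : ℕ) [NeZero N] (a : ZMod N → ℕ) (g : ZMod N) : ℂ :=
  ∑ r : ZMod N, (a r : ℂ) * Complex.exp (2 * Real.pi * Complex.I / N) ^ ((r * g).val)

lemma zeta_pow_N (N : ℕ) [NeZero N] :
    Complex.exp (2 * Real.pi * Complex.I / N) ^ N = 1 := by
  rw [← Complex.exp_nat_mul]
  have hN : (N : ℂ) ≠ 0 := Nat.cast_ne_zero.mpr (NeZero.ne N)
  rw [mul_div_cancel₀ _ hN]
  simpa [mul_comm] using Complex.exp_two_pi_mul_I

lemma zeta_pow_val_add (N : ℕ) [NeZero N] (x y : ZMod N) :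
    Complex.exp (2 * Real.pi * Complex.I / N) ^ ((x + y).val) =
    Complex.exp (2 * Real.pi * Complex.I / N) ^ x.val *
    Complex.exp (2 * Real.pi * Complex.I / N) ^ y.val := by
  rw [← pow_add, ZMod.val_add, ← pow_eq_pow_mod _ (zeta_pow_N N)]

/-- twisting by a 1-dimensional representation (shifting the multiplicity
function) does not change the refined SPI data `χ(g)^{d_g}` with `d_g = addOrderOf g`. -/
theorem refined_spi_twist_invariant (N : ℕ) [NeZero N] (a : ZMod N → ℕ) (s : ZMod N)
    (b : ZMod N → ℕ) (hb : ∀ r : ZMod N, b r = a (r - s)) :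
    ∀ g : ZMod N, chiChar N b g ^ (addOrderOf g) = chiChar N a g ^ (addOrderOf g) := by
  intro g
  set ζ := Complex.exp (2 * Real.pi * Complex.I / N) with hζ
  have hsum : chiChar N b g = ζ ^ ((s * g).val) * chiChar N a g := by
    unfold chiChar
    rw [Finset.mul_sum]
    refine Fintype.sum_equiv (Equiv.subRight s) _ _ (fun r => ?_)
    simp only [Equiv.subRight_apply, hb]
    have : (r - s) * g = r * g - s * g := by ring
    rw [this]
    have h2 : r * g = (r * g - s * g) + s * g := by ring
    rw [show ((r * g).val) = (((r * g - s * g) + s * g).val) by rw [← h2]]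
    rw [zeta_pow_val_add]
    ring
  rw [hsum, mul_pow]
  have hd : (addOrderOf g) • g = 0 := addOrderOf_nsmul_eq_zero g
  have hdvd : (N : ℕ) ∣ (s * g).val * addOrderOf g := by
    have : (s * g) * (addOrderOf g : ZMod N) = 0 := by
      have : (addOrderOf g : ZMod N) * g = 0 := by
        simpa [nsmul_eq_mul] using hd
      calc (s * g) * (addOrderOf g : ZMod N) = s * ((addOrderOf g : ZMod N) * g) := by ring
        _ = 0 := by rw [this, mul_zero]
    have h0 : ((s * g).val * addOrderOf g : ZMod N) = 0 := by
      push_cast [ZMod.natCast_val, ZMod.cast_id]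
      exact this
    exact (ZMod.natCast_eq_zero_iff _ _).mp (by exact_mod_cast h0)
  have hm : (s * g).val * addOrderOf g % N = 0 := Nat.mod_eq_zero_of_dvd hdvd
  have : (ζ ^ ((s * g).val)) ^ (addOrderOf g) = 1 := by
    rw [← pow_mul, pow_eq_pow_mod _ (zeta_pow_N N), hm, pow_zero]
  rw [this, one_mul]
end

section
/- Let N be a prime number and let a, b : ZMod N → ℕ satisfy Σ_{r} a(r) = Σ_{r} b(r) and χ_a(1)^N = χ_b(1)^N, where 1 denotes the generator of ZMod N. Then a and b differ by a 1-dimensional twist: there exists s : ZMod N such that a(r) = b(r − s) for all r : ZMod N. -/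
open Polynomial in
lemma key_aux (N : ℕ) [hN : Fact (Nat.Prime N)] {ζ : ℂ} (hζ : IsPrimitiveRoot ζ N)
    (c : ZMod N → ℤ) (h1 : ∑ r : ZMod N, (c r : ℂ) * ζ ^ r.val = 0)
    (h0 : ∑ r : ZMod N, c r = 0) : ∀ r, c r = 0 := by
  haveI : NeZero N := ⟨hN.out.ne_zero⟩
  set Q : ℚ[X] := ∑ r : ZMod N, C ((c r : ℚ)) * X ^ r.val with hQ
  have hcoeff : ∀ r : ZMod N, Q.coeff r.val = (c r : ℚ) := by
    intro r
    rw [hQ, finset_sum_coeff, Finset.sum_eq_single r]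
    · simp
    · intro r' _ hne
      rw [coeff_C_mul, coeff_X_pow, if_neg, mul_zero]
      exact fun h => hne (ZMod.val_injective N h.symm)
    · simp
  have haev : aeval ζ Q = 0 := by
    rw [hQ]
    simpa using h1
  have hdvd : cyclotomic N ℚ ∣ Q := by
    rw [cyclotomic_eq_minpoly_rat hζ hN.out.pos]
    exact minpoly.dvd ℚ ζ haev
  obtain ⟨t, ht⟩ := hdvd
  have hdegQ : Q.natDegree ≤ N - 1 := by
    apply natDegree_sum_le_of_forall_le
    intro r _
    calc (C ((c r : ℚ)) * X ^ r.val).natDegree ≤ (X ^ r.val).natDegree :=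
          natDegree_C_mul_le _ _
      _ = r.val := natDegree_X_pow _
      _ ≤ N - 1 := Nat.le_sub_one_of_lt (ZMod.val_lt r)
  have hdegcyc : (cyclotomic N ℚ).natDegree = N - 1 := by
    rw [natDegree_cyclotomic, Nat.totient_prime hN.out]
  have hcycconst : ∀ k, k < N → (cyclotomic N ℚ).coeff k = 1 := by
    intro k hk
    rw [cyclotomic_prime, finset_sum_coeff, Finset.sum_eq_single k]
    · simp
    · intro r' _ hne
      rw [coeff_X_pow, if_neg (fun h => hne h.symm)]
    · intro h
      exact absurd (Finset.mem_range.mpr hk) h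
  rcases eq_or_ne t 0 with rfl | htne
  · rw [mul_zero] at ht
    intro r
    have := hcoeff r
    rw [ht, coeff_zero] at this
    exact_mod_cast this.symm
  · have hdegt : t.natDegree = 0 := by
      have hQne : Q ≠ 0 := by
        rw [ht]
        exact mul_ne_zero (cyclotomic_ne_zero N ℚ) htne
      have := natDegree_mul (cyclotomic_ne_zero N ℚ) htne
      rw [← ht, hdegcyc] at this
      omega
    set u := t.coeff 0 with hu_def
    rw [eq_C_of_natDegree_eq_zero hdegt] at ht
    have hall : ∀ r : ZMod N, (c r : ℚ) = u := by
      intro r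
      rw [← hcoeff r, ht, coeff_mul_C, hcycconst r.val (ZMod.val_lt r)]
      ring
    have hsum : (N : ℚ) * u = 0 := by
      have : ∑ r : ZMod N, (c r : ℚ) = 0 := by exact_mod_cast congrArg (Int.cast : ℤ → ℚ) h0
      rw [Finset.sum_congr rfl (fun r _ => hall r), Finset.sum_const] at this
      simpa [mul_comm] using this
    have hu : u = 0 :=
      (mul_eq_zero.mp hsum).resolve_left (Nat.cast_ne_zero.mpr hN.out.ne_zero)
    intro r
    have := hall r
    rw [hu] at this
    exact_mod_cast this

/-- for prime `N`, if two multiplicity functions have equal total dimension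
and equal refined SPI at the generator (`χ(1)^N`), they differ by a 1-dimensional twist. -/
theorem refined_spi_generator_complete_prime (N : ℕ) [hN : Fact (Nat.Prime N)]
    (a b : ZMod N → ℕ)
    (hdim : ∑ r : ZMod N, a r = ∑ r : ZMod N, b r)
    (hchi : chiChar N a 1 ^ N = chiChar N b 1 ^ N) :
    ∃ s : ZMod N, ∀ r : ZMod N, a r = b (r - s) := by
  haveI : NeZero N := ⟨hN.out.ne_zero⟩
  set ζ : ℂ := Complex.exp (2 * Real.pi * Complex.I / N) with hζdef
  have hζ : IsPrimitiveRoot ζ N := Complex.isPrimitiveRoot_exp N (NeZero.ne N)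
  have hord : orderOf ζ = N := (hζ.eq_orderOf).symm
  have hpowmod : ∀ m : ℕ, ζ ^ (m % N) = ζ ^ m := by
    intro m
    conv_rhs => rw [← Nat.div_add_mod m N]
    rw [pow_add, pow_mul, hζ.pow_eq_one, one_pow, one_mul]
  -- step 1: find s with χ_a(1) = ζ^s.val * χ_b(1)
  obtain ⟨s, hs⟩ : ∃ s : ZMod N, chiChar N a 1 = ζ ^ s.val * chiChar N b 1 := by
    rcases eq_or_ne (chiChar N b 1) 0 with hb | hb
    · refine ⟨0, ?_⟩
      rw [hb, mul_zero]
      have : chiChar N a 1 ^ N = 0 := by rw [hchi, hb, zero_pow (NeZero.ne N)]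
      exact pow_eq_zero_iff (NeZero.ne N) |>.mp this
    · have hdiv : (chiChar N a 1 / chiChar N b 1) ^ N = 1 := by
        rw [div_pow, hchi, div_self (pow_ne_zero _ hb)]
      obtain ⟨i, _, hi⟩ := hζ.eq_pow_of_pow_eq_one hdiv
      refine ⟨(i : ZMod N), ?_⟩
      have hval : ζ ^ (ZMod.val (i : ZMod N)) = ζ ^ i := by
        rw [ZMod.val_natCast, hpowmod]
      rw [hval, hi, div_mul_cancel₀ _ hb]
  -- step 2: rewrite the twist
  have hmul1 : ∀ r : ZMod N, (r * 1 : ZMod N) = r := fun r => mul_one r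
  have hchia : chiChar N a 1 = ∑ r : ZMod N, (a r : ℂ) * ζ ^ r.val := by
    unfold chiChar; simp [← hζdef]
  have hchib : ζ ^ s.val * chiChar N b 1 = ∑ r : ZMod N, (b (r - s) : ℂ) * ζ ^ r.val := by
    have hmid : ζ ^ s.val * chiChar N b 1
        = ∑ r : ZMod N, (b r : ℂ) * ζ ^ ((r + s : ZMod N)).val := by
      unfold chiChar
      rw [Finset.mul_sum]
      refine Finset.sum_congr rfl fun r _ => ?_
      simp only [← hζdef, hmul1]
      rw [ZMod.val_add, hpowmod, pow_add]
      ring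
    rw [hmid]
    exact Fintype.sum_equiv (Equiv.addRight s) _ _ (fun r => by simp)
  -- step 3: apply key_aux
  set c : ZMod N → ℤ := fun r => (a r : ℤ) - (b (r - s) : ℤ) with hc
  have h1 : ∑ r : ZMod N, (c r : ℂ) * ζ ^ r.val = 0 := by
    have : chiChar N a 1 - ζ ^ s.val * chiChar N b 1 = 0 := by rw [hs, sub_self]
    rw [hchia, hchib, ← Finset.sum_sub_distrib] at this
    rw [← this]
    apply Finset.sum_congr rfl
    intro r _
    push_cast [hc]
    ring
  have h0 : ∑ r : ZMod N, c r = 0 := by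
    have hb' : ∑ r : ZMod N, b (r - s) = ∑ r : ZMod N, b r :=
      Fintype.sum_equiv (Equiv.subRight s) _ _ (fun r => rfl)
    simp only [hc, Finset.sum_sub_distrib]
    rw [sub_eq_zero]
    exact_mod_cast hdim.trans hb'.symm
  refine ⟨s, fun r => ?_⟩
  have := key_aux N hζ c h1 h0 r
  simp only [hc] at this
  omega
end

section
/- Let N be a prime number and let a, b : ZMod N → ℕ satisfy χ_a(g)^{d_g} = χ_b(g)^{d_g} for every g : ZMod N, where d_g is the additive order of g. Then a and b differ by a 1-dimensional twist: there exists s : ZMod N such that a(r) = b(r − s) for all r. (The refined symmetry-protected indices completely classify ℤ_N-symmetric representations when N is prime.) -/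
open Polynomial

/-- for prime `N`, if the refined SPI data `χ(g)^{d_g}` (with
`d_g = addOrderOf g`) of two multiplicity functions agree for every group element,
then they differ by a 1-dimensional twist. -/
theorem refined_spi_complete_prime (N : ℕ) [hN : Fact (Nat.Prime N)]
    (a b : ZMod N → ℕ)
    (hchi : ∀ g : ZMod N, chiChar N a g ^ (addOrderOf g) = chiChar N b g ^ (addOrderOf g)) :
    ∃ s : ZMod N, ∀ r : ZMod N, a r = b (r - s) := by
  have hNpos : 0 < N := hN.out.pos
  have hN1 : 1 < N := hN.out.one_lt
  set ζ : ℂ := Complex.exp (2 * Real.pi * Complex.I / N) with hζdef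
  have hprim : IsPrimitiveRoot ζ N := Complex.isPrimitiveRoot_exp N (NeZero.ne N)
  have hz1 : ζ ^ N = 1 := hprim.pow_eq_one
  have hzmod : ∀ m : ℕ, ζ ^ m = ζ ^ (m % N) := by
    intro m
    conv_lhs => rw [← Nat.div_add_mod m N]
    rw [pow_add, pow_mul, hz1, one_pow, one_mul]
  have hpow : ∀ (u g : ZMod N), (ζ ^ g.val) ^ u.val = ζ ^ ((u * g).val) := by
    intro u g
    rw [← pow_mul, ZMod.val_mul, ← hzmod, mul_comm]
  have hchidef : ∀ (c : ZMod N → ℕ) (g : ZMod N),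
      chiChar N c g = ∑ r : ZMod N, (c r : ℂ) * ζ ^ ((r * g).val) := fun _ _ => rfl
  -- total dimensions agree
  have h0 : (∑ r : ZMod N, (a r : ℂ)) = ∑ r : ZMod N, (b r : ℂ) := by
    have h := hchi 0
    simpa [hchidef, addOrderOf_zero] using h
  -- the twist at g = 1
  obtain ⟨s, hs⟩ : ∃ s : ZMod N, chiChar N a 1 = ζ ^ s.val * chiChar N b 1 := by
    have h := hchi 1
    rw [ZMod.addOrderOf_one] at h
    by_cases hb : chiChar N b 1 = 0
    · refine ⟨0, ?_⟩
      have ha0 : chiChar N a 1 = 0 := by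
        have : chiChar N a 1 ^ N = 0 := by rw [h, hb, zero_pow (NeZero.ne N)]
        exact pow_eq_zero_iff (NeZero.ne N) |>.mp this
      simp [ha0, hb]
    · have hpow1 : (chiChar N a 1 / chiChar N b 1) ^ N = 1 := by
        rw [div_pow, h, div_self (pow_ne_zero _ hb)]
      obtain ⟨i, hiN, hi⟩ := hprim.eq_pow_of_pow_eq_one hpow1
      refine ⟨(i : ZMod N), ?_⟩
      rw [ZMod.val_natCast_of_lt hiN]
      exact (div_eq_iff hb).mp hi.symm
  -- the comparison polynomial over ℚ
  set Q : ℚ[X] := (∑ r : ZMod N, C ((a r : ℚ)) * X ^ (r.val))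
      - ∑ r : ZMod N, C ((b r : ℚ)) * X ^ ((r + s).val) with hQdef
  have hQeval : ∀ g : ZMod N, aeval (ζ ^ g.val) Q
      = (∑ r : ZMod N, (a r : ℂ) * ζ ^ ((r * g).val))
        - ∑ r : ZMod N, (b r : ℂ) * ζ ^ (((r + s) * g).val) := by
    intro g
    simp only [hQdef, map_sub, map_sum, map_mul, aeval_C, map_pow, aeval_X, hpow]
    push_cast
    rfl
  have hshift : ∀ r : ZMod N, ζ ^ ((r + s).val) = ζ ^ s.val * ζ ^ (r.val) := by
    intro r
    rw [← pow_add, ZMod.val_add, ← hzmod, add_comm]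
  have hQz : aeval ζ Q = 0 := by
    have h1 := hQeval 1
    rw [ZMod.val_one N, pow_one] at h1
    rw [h1, sub_eq_zero]
    rw [hchidef, hchidef] at hs
    simp only [mul_one] at hs ⊢
    rw [hs, Finset.mul_sum]
    exact Finset.sum_congr rfl fun r _ => by rw [hshift r]; ring
  have hdvd : minpoly ℚ ζ ∣ Q := minpoly.dvd ℚ ζ hQz
  have hcyc : minpoly ℚ ζ = cyclotomic N ℚ := (cyclotomic_eq_minpoly_rat hprim hNpos).symm
  have hQg : ∀ g : ZMod N, g ≠ 0 → aeval (ζ ^ g.val) Q = 0 := by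
    intro g hg
    have hvne : g.val ≠ 0 := fun hv => hg ((ZMod.val_eq_zero g).mp hv)
    have hcop : Nat.Coprime g.val N := Nat.Coprime.symm <|
      (hN.out.coprime_iff_not_dvd).mpr fun hd =>
        hvne (Nat.eq_zero_of_dvd_of_lt hd (ZMod.val_lt g))
    have hprim' : IsPrimitiveRoot (ζ ^ g.val) N := hprim.pow_of_coprime g.val hcop
    have h0' : aeval (ζ ^ g.val) (minpoly ℚ ζ) = 0 := by
      rw [hcyc, cyclotomic_eq_minpoly_rat hprim' hNpos]
      exact minpoly.aeval ℚ _
    obtain ⟨c, hc⟩ := hdvd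
    rw [hc, map_mul, h0', zero_mul]
  -- key identity for all g
  have key : ∀ g : ZMod N, (∑ r : ZMod N, (a r : ℂ) * ζ ^ ((r * g).val))
      = ∑ r : ZMod N, (b r : ℂ) * ζ ^ (((r + s) * g).val) := by
    intro g
    by_cases hg : g = 0
    · subst hg
      simpa using h0
    · have := hQg g hg
      rw [hQeval g] at this
      exact sub_eq_zero.mp this
  -- twisted multiplicity function
  refine ⟨s, ?_⟩
  set a' : ZMod N → ℕ := fun r => b (r - s) with ha'def
  have hchia' : ∀ g : ZMod N, chiChar N a g = chiChar N a' g := by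
    intro g
    rw [hchidef, hchidef, key g]
    refine Fintype.sum_equiv (Equiv.addRight s) _ _ fun r => ?_
    simp [ha'def, add_sub_cancel_right]
  -- Fourier inversion via a degree-< N polynomial with N distinct roots
  set R : ℂ[X] := ∑ r : ZMod N, C ((a r : ℂ) - (a' r : ℂ)) * X ^ (r.val) with hRdef
  have hReval : ∀ g : ZMod N, R.eval (ζ ^ g.val) = 0 := by
    intro g
    have : R.eval (ζ ^ g.val) = chiChar N a g - chiChar N a' g := by
      simp only [hRdef, eval_finset_sum, eval_mul, eval_C, eval_pow, eval_X, hpow,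
        hchidef, sub_mul, Finset.sum_sub_distrib]
    rw [this, hchia' g, sub_self]
  have hinj : Function.Injective (fun g : ZMod N => ζ ^ g.val) := by
    intro g h hgh
    exact ZMod.val_injective N (hprim.pow_inj (ZMod.val_lt g) (ZMod.val_lt h) hgh)
  have hRdeg : R.natDegree < Fintype.card (ZMod N) := by
    rw [ZMod.card]
    have hle : R.natDegree ≤ N - 1 := natDegree_sum_le_of_forall_le _ _ fun r _ =>
      (natDegree_C_mul_X_pow_le _ _).trans (Nat.le_sub_one_of_lt (ZMod.val_lt r))
    omega
  have hR0 : R = 0 := eq_zero_of_natDegree_lt_card_of_eval_eq_zero R hinj hReval hRdeg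
  intro r
  have hc : R.coeff r.val = (a r : ℂ) - (a' r : ℂ) := by
    rw [hRdef, finset_sum_coeff]
    rw [Finset.sum_eq_single r]
    · rw [coeff_C_mul, coeff_X_pow, if_pos rfl, mul_one]
    · intro q _ hq
      simp only [coeff_C_mul, coeff_X_pow]
      rw [if_neg, mul_zero]
      exact fun hv => hq (ZMod.val_injective N hv.symm)
    · simp
  rw [hR0] at hc
  have : (a r : ℂ) = (a' r : ℂ) := by
    have := hc.symm
    rwa [coeff_zero, sub_eq_zero] at this
  exact_mod_cast this
end

section
/- For N = 4 (so ζ = i), there exist a, b : ZMod 4 → ℕ such that χ_a(g)^{d_g} = χ_b(g)^{d_g} for every g : ZMod 4 (where d_g is the additive order of g), yet a and b do not differ by a 1-dimensional twist: there is no s : ZMod 4 with a(r) = b(r − s) for all r. (The refined symmetry-protected indices fail to classify ℤ_4-symmetric representations.) -/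
lemma zeta4_eq_I : Complex.exp (2 * Real.pi * Complex.I / (4:ℕ)) = Complex.I := by
  have h : (2 * Real.pi * Complex.I / (4:ℕ)) = (Real.pi/2 : ℂ) * Complex.I := by
    push_cast; ring
  rw [h, Complex.exp_mul_I, Complex.cos_pi_div_two, Complex.sin_pi_div_two]
  ring

lemma chi_eval4 (a : ZMod 4 → ℕ) (g : ZMod 4) :
    chiChar 4 a g = (a 0 : ℂ) * Complex.I ^ ((0 * g : ZMod 4)).val
      + (a 1 : ℂ) * Complex.I ^ ((1 * g : ZMod 4)).val
      + (a 2 : ℂ) * Complex.I ^ ((2 * g : ZMod 4)).val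
      + (a 3 : ℂ) * Complex.I ^ ((3 * g : ZMod 4)).val := by
  rw [chiChar, zeta4_eq_I]
  exact Fin.sum_univ_four _

lemma chi_eval4v (x0 x1 x2 x3 : ℕ) (g : ZMod 4) :
    chiChar 4 ![x0,x1,x2,x3] g = (x0 : ℂ) * Complex.I ^ ((0 * g : ZMod 4)).val
      + (x1 : ℂ) * Complex.I ^ ((1 * g : ZMod 4)).val
      + (x2 : ℂ) * Complex.I ^ ((2 * g : ZMod 4)).val
      + (x3 : ℂ) * Complex.I ^ ((3 * g : ZMod 4)).val := by
  rw [chi_eval4 ![x0,x1,x2,x3]]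
  rfl

lemma addOrderOf_zmod4_two : addOrderOf (2 : ZMod 4) = 2 := by
  rw [show (2:ZMod 4) = ((2:ℕ):ZMod 4) from rfl, ZMod.addOrderOf_coe] <;> norm_num

lemma addOrderOf_zmod4_three : addOrderOf (3 : ZMod 4) = 4 := by
  rw [show (3:ZMod 4) = ((3:ℕ):ZMod 4) from rfl, ZMod.addOrderOf_coe] <;> norm_num

/-- the refined SPIs fail to classify `ℤ₄`-symmetric representations:
there exist multiplicity functions `a, b : ZMod 4 → ℕ` whose refined SPI data
`χ(g)^{d_g}` agree for every `g`, yet `a` and `b` do not differ by a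
1-dimensional twist. -/
theorem refined_spi_incomplete_four :
    ∃ a b : ZMod 4 → ℕ,
      (∀ g : ZMod 4, chiChar 4 a g ^ (addOrderOf g) = chiChar 4 b g ^ (addOrderOf g)) ∧
      ¬ ∃ s : ZMod 4, ∀ r : ZMod 4, a r = b (r - s) := by
  refine ⟨![2,2,2,0], ![3,1,1,1], ?_, by unfold ZMod; decide⟩
  have ha0 : chiChar 4 ![2,2,2,0] 0 = 6 := by
    rw [chi_eval4v]
    norm_num [show ((0:ZMod 4)).val = 0 from rfl]
  have hb0 : chiChar 4 ![3,1,1,1] 0 = 6 := by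
    rw [chi_eval4v]
    norm_num [show ((0:ZMod 4)).val = 0 from rfl]
  have ha1 : chiChar 4 ![2,2,2,0] 1 = 2 * Complex.I := by
    rw [chi_eval4v]
    norm_num [show ((0:ZMod 4)).val = 0 from rfl, show ((1:ZMod 4)).val = 1 from rfl,
      show ((2:ZMod 4)).val = 2 from rfl, show ((3:ZMod 4)).val = 3 from rfl,
      pow_succ, Complex.I_sq]
    try ring
  have hb1 : chiChar 4 ![3,1,1,1] 1 = 2 := by
    rw [chi_eval4v]
    norm_num [show ((0:ZMod 4)).val = 0 from rfl, show ((1:ZMod 4)).val = 1 from rfl,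
      show ((2:ZMod 4)).val = 2 from rfl, show ((3:ZMod 4)).val = 3 from rfl,
      pow_succ, Complex.I_sq]
    ring
  have ha2 : chiChar 4 ![2,2,2,0] 2 = 2 := by
    rw [chi_eval4v]
    norm_num [show ((0:ZMod 4)).val = 0 from rfl, show ((2:ZMod 4)).val = 2 from rfl,
      show ((4:ZMod 4)).val = 0 from rfl, show ((6:ZMod 4)).val = 2 from rfl,
      pow_succ, Complex.I_sq]
    try ring
  have hb2 : chiChar 4 ![3,1,1,1] 2 = 2 := by
    rw [chi_eval4v]
    norm_num [show ((0:ZMod 4)).val = 0 from rfl, show ((2:ZMod 4)).val = 2 from rfl,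
      show ((4:ZMod 4)).val = 0 from rfl, show ((6:ZMod 4)).val = 2 from rfl,
      pow_succ, Complex.I_sq]
    try ring
  have ha3 : chiChar 4 ![2,2,2,0] 3 = -(2 * Complex.I) := by
    rw [chi_eval4v]
    norm_num [show ((0:ZMod 4)).val = 0 from rfl, show ((3:ZMod 4)).val = 3 from rfl,
      show ((6:ZMod 4)).val = 2 from rfl, show ((9:ZMod 4)).val = 1 from rfl,
      pow_succ, Complex.I_sq]
    try ring
  have hb3 : chiChar 4 ![3,1,1,1] 3 = 2 := by
    rw [chi_eval4v]
    norm_num [show ((0:ZMod 4)).val = 0 from rfl, show ((3:ZMod 4)).val = 3 from rfl,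
      show ((6:ZMod 4)).val = 2 from rfl, show ((9:ZMod 4)).val = 1 from rfl,
      pow_succ, Complex.I_sq]
    try ring
  intro g
  fin_cases g
  · erw [show (⟨0, by norm_num⟩ : ZMod 4) = 0 from rfl, ha0, hb0]
  · have e1 : addOrderOf ((fun i => i) (1:ZMod 4)) = 4 := ZMod.addOrderOf_one 4
    erw [show (⟨1, by norm_num⟩ : ZMod 4) = 1 from rfl, ha1, hb1, e1]
    rw [show (2 * Complex.I) ^ 4 = 2^4 * (Complex.I^2)^2 by ring, Complex.I_sq]
    norm_num
  · erw [show (⟨2, by norm_num⟩ : ZMod 4) = 2 from rfl, ha2, hb2]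
  · have e3 : addOrderOf ((fun i => i) (3:ZMod 4)) = 4 := addOrderOf_zmod4_three
    erw [show (⟨3, by norm_num⟩ : ZMod 4) = 3 from rfl, ha3, hb3, e3]
    rw [show (-(2 * Complex.I)) ^ 4 = 2^4 * (Complex.I^2)^2 by ring, Complex.I_sq]
    norm_num
end

section
/- For N = 3 (so ζ = exp(2πi/3)), there exist a, b : ZMod 3 → ℕ such that: (i) Σ_r a(r) = Σ_r b(r); (ii) |χ_a(g)| = |χ_b(g)| for every g : ZMod 3; (iii) χ_a(g)^2 = χ_b(g)^2 for every g : ZMod 3 (so the character of the tensor square of the representation encoded by a equals that of the tensor square of the representation encoded by b); (iv) a and b do not differ by a 1-dimensional twist, i.e., there is no s : ZMod 3 with a(r) = b(r − s) for all r; and (v) χ_a(1)^3 ≠ χ_b(1)^3, so the refined index distinguishes them. (The unrefined symmetry-protected indices, built from absolute values of characters, are not complete invariants.) -/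
open ZMod

section
variable {N : ℕ} [NeZero N]

lemma exp_pow_val_eq_stdAddChar (x : ZMod N) :
    Complex.exp (2 * Real.pi * Complex.I / N) ^ x.val = stdAddChar x := by
  rw [stdAddChar_apply, toCircle_apply, ← Complex.exp_nat_mul]
  ring_nf

lemma chiChar_eq_sum_stdAddChar (a : ZMod N → ℕ) (g : ZMod N) :
    chiChar N a g = ∑ r, (a r : ℂ) * stdAddChar (r * g) := by
  simp only [chiChar, exp_pow_val_eq_stdAddChar]

lemma chiChar_zero (a : ZMod N → ℕ) : chiChar N a 0 = ((∑ r, a r : ℕ) : ℂ) := by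
  simp [chiChar_eq_sum_stdAddChar]

lemma chiChar_add (a b : ZMod N → ℕ) (g : ZMod N) :
    chiChar N (a + b) g = chiChar N a g + chiChar N b g := by
  simp only [chiChar, Pi.add_apply, Nat.cast_add, add_mul, Finset.sum_add_distrib]

lemma chiChar_const_of_ne_zero (c : ℕ) {g : ZMod N} (hg : g ≠ 0) :
    chiChar N (fun _ ↦ c) g = 0 := by
  classical
  rw [chiChar_eq_sum_stdAddChar, ← Finset.mul_sum,
    AddChar.sum_mulShift g (isPrimitive_stdAddChar N), if_neg hg, Nat.cast_zero, mul_zero]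

lemma chiChar_eq_neg_of_add_eq_const {a b : ZMod N → ℕ} {c : ℕ} (hab : a + b = fun _ ↦ c)
    {g : ZMod N} (hg : g ≠ 0) : chiChar N b g = -chiChar N a g := by
  rw [eq_neg_iff_add_eq_zero, add_comm, ← chiChar_add, hab, chiChar_const_of_ne_zero c hg]

lemma chiChar_eq_or_eq_neg_of_add_eq_const {a b : ZMod N → ℕ} {c : ℕ}
    (hab : a + b = fun _ ↦ c) (hsum : ∑ r, a r = ∑ r, b r) (g : ZMod N) :
    chiChar N b g = chiChar N a g ∨ chiChar N b g = -chiChar N a g := by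
  rcases eq_or_ne g 0 with rfl | hg
  · exact .inl (by rw [chiChar_zero, chiChar_zero, hsum])
  · exact .inr (chiChar_eq_neg_of_add_eq_const hab hg)

end

lemma ZMod.sum_univ_three {M : Type*} [AddCommMonoid M] (f : ZMod 3 → M) :
    ∑ r, f r = f 0 + f 1 + f 2 :=
  Fin.sum_univ_three f

lemma chiChar_three_one (a : ZMod 3 → ℕ) :
    chiChar 3 a 1 = a 0 + a 1 * Complex.exp (2 * Real.pi * Complex.I / 3)
      + a 2 * Complex.exp (2 * Real.pi * Complex.I / 3) ^ 2 := by
  simp only [chiChar, ZMod.sum_univ_three, mul_one, ZMod.val_zero, ZMod.val_one, pow_zero, pow_one]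
  rfl

lemma norm_exp_two_pi_I_div (N : ℕ) [NeZero N] : ‖Complex.exp (2 * Real.pi * Complex.I / N)‖ = 1 :=
  (Complex.isPrimitiveRoot_exp N (NeZero.ne N)).norm'_eq_one (NeZero.ne N)

/-- the unrefined SPIs (absolute values of characters) are not complete
invariants for `ℤ₃`: there exist multiplicity functions `a, b : ZMod 3 → ℕ` with equal
total dimension, equal `|χ(g)|` for all `g`, and equal tensor-square characters
`χ(g)²`, which do not differ by a 1-dimensional twist, and which the refined index
`χ(1)³` distinguishes. -/
theorem unrefined_spi_incomplete_three :
    ∃ a b : ZMod 3 → ℕ,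
      (∑ r : ZMod 3, a r = ∑ r : ZMod 3, b r) ∧
      (∀ g : ZMod 3, ‖chiChar 3 a g‖ = ‖chiChar 3 b g‖) ∧
      (∀ g : ZMod 3, chiChar 3 a g ^ 2 = chiChar 3 b g ^ 2) ∧
      (¬ ∃ s : ZMod 3, ∀ r : ZMod 3, a r = b (r - s)) ∧
      chiChar 3 a 1 ^ 3 ≠ chiChar 3 b 1 ^ 3 := by
  let a : ZMod 3 → ℕ := ![0, 2, 1]
  let b : ZMod 3 → ℕ := ![2, 0, 1]
  have hab : a + b = fun _ ↦ 2 := by decide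
  have hsum : ∑ r, a r = ∑ r, b r := by decide
  have hχ := chiChar_eq_or_eq_neg_of_add_eq_const hab hsum
  have hχa : chiChar 3 a 1 ≠ 0 := by
    set ζ := Complex.exp (2 * Real.pi * Complex.I / 3)
    have hζ : ‖ζ‖ = 1 := norm_exp_two_pi_I_div 3
    have : chiChar 3 a 1 = ζ * (ζ + 2) := by
      rw [chiChar_three_one]; push_cast [a]; ring
    rw [this]
    refine mul_ne_zero (norm_ne_zero_iff.mp (by simp [hζ])) fun h ↦ ?_
    rw [add_eq_zero_iff_eq_neg.mp h] at hζ
    norm_num at hζ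
  refine ⟨a, b, hsum, fun g ↦ ?_, fun g ↦ ?_, ?_, ?_⟩
  · rcases hχ g with h | h <;> simp [h]
  · rcases hχ g with h | h <;> simp [h]
  · unfold ZMod; decide
  · rw [chiChar_eq_neg_of_add_eq_const hab one_ne_zero, Odd.neg_pow (by decide), ne_eq, self_eq_neg]
    exact pow_ne_zero 3 hχa
end

section
/- Necessity direction of the ℤ₂ classification: Let a₀, a₁ : ℕ with χ = (a₀ : ℤ) − a₁ ≠ 0 and d = a₀ + a₁. If the pair of positive rationals (π₀, π₁) is realizable, then every prime dividing the numerator or the denominator of π₀ divides d, and every prime dividing the numerator or the denominator of π₁ divides χ. -/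
/-- The pair of positive rationals `(π₀, π₁)` is realizable for the on-site `ℤ₂`
representation with `a₀` eigenvalues `+1` and `a₁` eigenvalues `-1` (so `d = a₀ + a₁`
and `χ = a₀ - a₁`) if there exist naturals `N₁, N₂, α₀, α₁, β₀, β₁` satisfying the
consistency conditions of the strong-equivalence classification. -/
lemma key_lemma (q : ℚ) (c : ℤ) (N₁ N₂ : ℕ) (A B : ℤ)
    (h1 : (c : ℚ) ^ N₁ * q = (A : ℚ)) (h2 : (c : ℚ) ^ N₂ = q * (B : ℚ)) :
    ∀ p : ℕ, p.Prime → (p ∣ q.num.natAbs ∨ p ∣ q.den) → (p : ℤ) ∣ c := by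
  intro p hp hdvd
  have hpz : Prime (p : ℤ) := Nat.prime_iff_prime_int.mp hp
  have hden : (q.den : ℚ) ≠ 0 := Nat.cast_ne_zero.mpr q.den_nz
  have key1 : c ^ N₁ * q.num = A * (q.den : ℤ) := by
    have := h1
    rw [← Rat.num_div_den q] at this
    field_simp at this
    rw [mul_comm A]
    exact_mod_cast this
  have key2 : c ^ N₂ * (q.den : ℤ) = q.num * B := by
    have := h2
    rw [← Rat.num_div_den q] at this
    field_simp at this
    exact_mod_cast this
  have hcop : Nat.gcd q.num.natAbs q.den = 1 := q.reduced
  have hiff : (p : ℤ) ∣ q.num ↔ p ∣ q.num.natAbs := by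
    rw [← Int.dvd_natAbs, Int.natCast_dvd_natCast]
  rcases hdvd with hnum | hd
  · have hpn : (p : ℤ) ∣ q.num := hiff.mpr hnum
    have hdv : (p : ℤ) ∣ c ^ N₂ * (q.den : ℤ) := key2 ▸ hpn.mul_right B
    have hnd : ¬ (p : ℤ) ∣ (q.den : ℤ) := by
      rw [Int.natCast_dvd_natCast]
      intro h
      have := Nat.dvd_gcd hnum h
      rw [hcop] at this
      exact hp.one_lt.ne' (Nat.dvd_one.mp this)
    exact hpz.dvd_of_dvd_pow ((hpz.dvd_or_dvd hdv).resolve_right hnd)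
  · have hpd : (p : ℤ) ∣ (q.den : ℤ) := Int.natCast_dvd_natCast.mpr hd
    have hdv : (p : ℤ) ∣ c ^ N₁ * q.num := key1 ▸ hpd.mul_left A
    have hnn : ¬ (p : ℤ) ∣ q.num := by
      rw [hiff]
      intro h
      have := Nat.dvd_gcd h hd
      rw [hcop] at this
      exact hp.one_lt.ne' (Nat.dvd_one.mp this)
    exact hpz.dvd_of_dvd_pow ((hpz.dvd_or_dvd hdv).resolve_right hnn)

def Realizable (a₀ a₁ : ℕ) (π₀ π₁ : ℚ) : Prop :=
  ∃ N₁ N₂ α₀ α₁ β₀ β₁ : ℕ,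
    ((a₀ + a₁ : ℕ) : ℚ) ^ N₁ * π₀ = (α₀ : ℚ) + (α₁ : ℚ) ∧
    ((a₀ + a₁ : ℕ) : ℚ) ^ N₂ = π₀ * ((β₀ : ℚ) + (β₁ : ℚ)) ∧
    (((a₀ : ℤ) - (a₁ : ℤ) : ℤ) : ℚ) ^ N₁ * π₁ = (α₀ : ℚ) - (α₁ : ℚ) ∧
    (((a₀ : ℤ) - (a₁ : ℤ) : ℤ) : ℚ) ^ N₂ = π₁ * ((β₀ : ℚ) - (β₁ : ℚ))

/-- necessity direction of the `ℤ₂` classification. If `χ = a₀ - a₁ ≠ 0`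
and `(π₀, π₁)` is realizable, then every prime dividing the numerator or denominator
of `π₀` divides `d = a₀ + a₁`, and every prime dividing the numerator or denominator
of `π₁` divides `χ`. -/
theorem z2_classification_necessity (a₀ a₁ : ℕ)
    (hχ : (a₀ : ℤ) - (a₁ : ℤ) ≠ 0) (π₀ π₁ : ℚ) (hπ₀ : 0 < π₀) (hπ₁ : 0 < π₁)
    (hreal : Realizable a₀ a₁ π₀ π₁) :
    (∀ p : ℕ, p.Prime → (p ∣ π₀.num.natAbs ∨ p ∣ π₀.den) → p ∣ a₀ + a₁) ∧
    (∀ p : ℕ, p.Prime → (p ∣ π₁.num.natAbs ∨ p ∣ π₁.den) →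
      (p : ℤ) ∣ (a₀ : ℤ) - (a₁ : ℤ)) := by
  obtain ⟨N₁, N₂, α₀, α₁, β₀, β₁, h1, h2, h3, h4⟩ := hreal
  constructor
  · intro p hp hdvd
    have h1' : (((a₀ + a₁ : ℕ) : ℤ) : ℚ) ^ N₁ * π₀ = (((α₀ + α₁ : ℕ) : ℤ) : ℚ) := by
      push_cast; push_cast at h1; linarith
    have h2' : (((a₀ + a₁ : ℕ) : ℤ) : ℚ) ^ N₂ = π₀ * (((β₀ + β₁ : ℕ) : ℤ) : ℚ) := by
      push_cast; push_cast at h2; linarith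
    have := key_lemma π₀ ((a₀ + a₁ : ℕ) : ℤ) N₁ N₂ _ _ h1' h2' p hp hdvd
    exact_mod_cast this
  · intro p hp hdvd
    have h3' : (((a₀ : ℤ) - a₁ : ℤ) : ℚ) ^ N₁ * π₁ = (((α₀ : ℤ) - α₁ : ℤ) : ℚ) := by
      push_cast; push_cast at h3; linarith
    have h4' : (((a₀ : ℤ) - a₁ : ℤ) : ℚ) ^ N₂ = π₁ * (((β₀ : ℤ) - β₁ : ℤ) : ℚ) := by
      push_cast; push_cast at h4; linarith
    exact key_lemma π₁ _ N₁ N₂ _ _ h3' h4' p hp hdvd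
end

section
/- Realizability direction of the ℤ₂ classification: Let a₀, a₁ : ℕ with a₀ ≥ 1, a₁ ≥ 1 and a₀ ≠ a₁; set d = a₀ + a₁ and χ = (a₀ : ℤ) − a₁. Let π₀ and π₁ be positive rationals such that every prime dividing the numerator or the denominator of π₀ divides d, and every prime dividing the numerator or the denominator of π₁ divides χ. Then the pair (π₀, π₁) is realizable. -/
lemma aux_dvd_pow (m : ℕ) : ∀ n : ℕ, 0 < n → (∀ p, p.Prime → p ∣ n → p ∣ m) → n ∣ m ^ n := by
  intro n
  induction n using Nat.strong_induction_on with
  | _ n ih =>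
    intro hn h
    rcases eq_or_lt_of_le (show 1 ≤ n from hn) with h1 | h2
    · simp [← h1]
    · have hn1 : n ≠ 1 := by omega
      have hp := Nat.minFac_prime hn1
      have hpd : n.minFac ∣ n := Nat.minFac_dvd n
      have hpm : n.minFac ∣ m := h _ hp hpd
      set k := n / n.minFac with hk
      have hkn : n.minFac * k = n := Nat.mul_div_cancel' hpd
      have hklt : k < n := Nat.div_lt_self (by omega) hp.two_le
      have hk0 : 0 < k := Nat.div_pos (Nat.minFac_le (by omega)) hp.pos
      have hkd : k ∣ n := dvd_of_mul_left_eq n.minFac hkn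
      have ihk : k ∣ m ^ k := ih k hklt hk0 (fun p hp2 hpk => h p hp2 (hpk.trans hkd))
      calc n = n.minFac * k := hkn.symm
        _ ∣ m * m ^ k := mul_dvd_mul hpm ihk
        _ = m ^ (k + 1) := (pow_succ' m k).symm
        _ ∣ m ^ n := pow_dvd_pow m (by omega)

lemma aux_cast (q : ℚ) (z : ℤ) (h : (q.den : ℤ) ∣ z) :
    ((z / q.den * q.num : ℤ) : ℚ) = (z : ℚ) * q := by
  obtain ⟨t, ht⟩ := h
  subst ht
  have hd0 : (q.den : ℤ) ≠ 0 := by exact_mod_cast q.den_ne_zero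
  rw [Int.mul_ediv_cancel_left _ hd0]
  have hq : (q.num : ℚ) = q * q.den := (Rat.mul_den_eq_num q).symm
  push_cast
  rw [hq]; ring

lemma key (d : ℕ) (χ : ℤ) (hd2 : 2 ≤ d) (hχ0 : χ ≠ 0) (hχd : χ.natAbs < d)
    (hpar : Even (d : ℤ) ↔ Even χ) (π₀ π₁ : ℚ) (hπ₀ : 0 < π₀) (hπ₁ : 0 < π₁)
    (h₀ : ∀ p : ℕ, p.Prime → (p ∣ π₀.num.natAbs ∨ p ∣ π₀.den) → p ∣ d)
    (h₁ : ∀ p : ℕ, p.Prime → (p ∣ π₁.num.natAbs ∨ p ∣ π₁.den) → (p : ℤ) ∣ χ) :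
    ∃ (N α₀ α₁ : ℕ), (d : ℚ) ^ N * π₀ = (α₀ : ℚ) + α₁ ∧ (χ : ℚ) ^ N * π₁ = (α₀ : ℚ) - α₁ := by
  set K := max π₀.den π₁.den with hK
  have hden₀K : π₀.den ∣ d ^ K := by
    refine (aux_dvd_pow d π₀.den π₀.pos (fun p hp hpd => h₀ p hp (Or.inr hpd))).trans
      (pow_dvd_pow d (le_max_left _ _))
  have hden₁K : (π₁.den : ℤ) ∣ χ ^ K := by
    have h1 : π₁.den ∣ χ.natAbs ^ π₁.den := by
      refine aux_dvd_pow χ.natAbs π₁.den π₁.pos (fun p hp hpd => ?_)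
      exact Int.natCast_dvd_natCast.mp (Int.dvd_natAbs.mpr (h₁ p hp (Or.inr hpd)))
    have h2 : π₁.den ∣ χ.natAbs ^ K := h1.trans (pow_dvd_pow _ (le_max_right _ _))
    rw [← Int.natAbs_pow] at h2
    exact Int.dvd_natAbs.mp (Int.natCast_dvd_natCast.mpr h2)
  -- growth
  have hd0 : (0 : ℚ) < d := by positivity
  have hr1 : ((χ.natAbs : ℚ) / d) < 1 := by
    rw [div_lt_one hd0]; exact_mod_cast hχd
  have hr0 : (0 : ℚ) ≤ (χ.natAbs : ℚ) / d := by positivity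
  obtain ⟨n, hn⟩ := exists_pow_lt_of_lt_one (show (0:ℚ) < π₀ / π₁ by positivity) hr1
  set N := max n K + 1 with hN
  have hnN : n ≤ N := by omega
  have hKN : K ≤ N := by omega
  have hrN : ((χ.natAbs : ℚ) / d) ^ N ≤ ((χ.natAbs : ℚ) / d) ^ n :=
    pow_le_pow_of_le_one hr0 hr1.le hnN
  have hlt : (χ.natAbs : ℚ) ^ N * π₁ < (d : ℚ) ^ N * π₀ := by
    have h3 : ((χ.natAbs : ℚ) / d) ^ N < π₀ / π₁ := lt_of_le_of_lt hrN hn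
    rw [div_pow, div_lt_div_iff₀ (by positivity) hπ₁] at h3
    linarith
  -- integrality
  have hden₀ : (π₀.den : ℤ) ∣ (d : ℤ) ^ N := by
    have := hden₀K.trans (pow_dvd_pow d hKN)
    exact_mod_cast Int.natCast_dvd_natCast.mpr this
  have hden₁ : (π₁.den : ℤ) ∣ χ ^ N := hden₁K.trans (pow_dvd_pow χ hKN)
  set a : ℤ := (d : ℤ) ^ N / π₀.den * π₀.num with haa
  set b : ℤ := χ ^ N / π₁.den * π₁.num with hbb
  have ha : ((a : ℤ) : ℚ) = (d : ℚ) ^ N * π₀ := by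
    rw [haa, aux_cast π₀ _ hden₀]; push_cast; ring
  have hb : ((b : ℤ) : ℚ) = (χ : ℚ) ^ N * π₁ := by
    rw [hbb, aux_cast π₁ _ hden₁]; push_cast; ring
  have habs : |b| < a := by
    have h5 : |(χ : ℚ)| = (χ.natAbs : ℚ) := by
      rw [← Int.cast_abs, Int.abs_eq_natAbs, Int.cast_natCast]
    have hcb : |(b : ℚ)| < (a : ℚ) := by
      rw [ha, hb, abs_mul, abs_pow, h5, abs_of_pos hπ₁]; exact hlt
    rw [← Int.cast_abs] at hcb
    exact_mod_cast hcb
  -- parity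
  have hamul : a * π₀.den = (d : ℤ) ^ N * π₀.num := by
    rw [haa, mul_comm ((d:ℤ)^N / π₀.den) π₀.num, mul_assoc, Int.ediv_mul_cancel hden₀]; ring
  have hbmul : b * π₁.den = χ ^ N * π₁.num := by
    rw [hbb, mul_comm (χ^N / π₁.den) π₁.num, mul_assoc, Int.ediv_mul_cancel hden₁]; ring
  have hpar2 : Even (a + b) := by
    by_cases hE : Even (d : ℤ)
    · have hEχ : Even χ := hpar.mp hE
      have hEa : Even a := by
        have hM : (π₀.den : ℤ) ∣ (d : ℤ) ^ (max n K) := by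
          have := hden₀K.trans (pow_dvd_pow d (le_max_right n K))
          exact_mod_cast Int.natCast_dvd_natCast.mpr this
        have : a = (d : ℤ) * ((d : ℤ) ^ (max n K) / π₀.den) * π₀.num := by
          rw [haa, hN, pow_succ, mul_comm ((d:ℤ)^(max n K)) (d:ℤ), Int.mul_ediv_assoc _ hM]
        obtain ⟨c, hc⟩ := hE
        exact ⟨c * ((d : ℤ) ^ (max n K) / π₀.den) * π₀.num, by rw [this, hc]; ring⟩
      have hEb : Even b := by
        have hM : (π₁.den : ℤ) ∣ χ ^ (max n K) := hden₁K.trans (pow_dvd_pow χ (le_max_right n K))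
        have : b = χ * (χ ^ (max n K) / π₁.den) * π₁.num := by
          rw [hbb, hN, pow_succ, mul_comm (χ^(max n K)) χ, Int.mul_ediv_assoc _ hM]
        obtain ⟨c, hc⟩ := hEχ
        exact ⟨c * (χ ^ (max n K) / π₁.den) * π₁.num, by rw [this, hc]; ring⟩
      exact hEa.add hEb
    · have hOχ : ¬ Even χ := fun h => hE (hpar.mpr h)
      have hOa : Odd a := by
        rw [← Int.not_even_iff_odd]
        intro hEa
        have h2 : (2 : ℤ) ∣ (d : ℤ) ^ N * π₀.num := by
          rw [← hamul]; exact Dvd.dvd.mul_right hEa.two_dvd _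
        rcases (Int.prime_two.dvd_mul.mp h2) with h3 | h3
        · exact hE (even_iff_two_dvd.mpr (Int.prime_two.dvd_of_dvd_pow h3))
        · have h4 : (2 : ℕ) ∣ π₀.num.natAbs := by
            exact Int.natCast_dvd_natCast.mp (Int.dvd_natAbs.mpr h3)
          have := h₀ 2 Nat.prime_two (Or.inl h4)
          apply hE
          exact even_iff_two_dvd.mpr (by exact_mod_cast Int.natCast_dvd_natCast.mpr this)
      have hOb : Odd b := by
        rw [← Int.not_even_iff_odd]
        intro hEb
        have h2 : (2 : ℤ) ∣ χ ^ N * π₁.num := by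
          rw [← hbmul]; exact Dvd.dvd.mul_right hEb.two_dvd _
        rcases (Int.prime_two.dvd_mul.mp h2) with h3 | h3
        · exact hOχ (even_iff_two_dvd.mpr (Int.prime_two.dvd_of_dvd_pow h3))
        · have h4 : (2 : ℕ) ∣ π₁.num.natAbs := by exact_mod_cast Int.dvd_natAbs.mpr h3
          exact hOχ (even_iff_two_dvd.mpr (h₁ 2 Nat.prime_two (Or.inl h4)))
      exact hOa.add_odd hOb
  have habs' := abs_lt.mp habs
  obtain ⟨u, hu⟩ := hpar2
  have hpar3 : Even (a - b) := ⟨u - b, by omega⟩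
  obtain ⟨v, hv⟩ := hpar3
  have hu0 : 0 ≤ u := by omega
  have hv0 : 0 ≤ v := by omega
  refine ⟨N, u.toNat, v.toNat, ?_, ?_⟩
  · rw [← ha]
    have : a = u.toNat + v.toNat := by omega
    exact_mod_cast congrArg (Int.cast : ℤ → ℚ) this
  · rw [← hb]
    have : b = (u.toNat : ℤ) - v.toNat := by omega
    rw [this]; push_cast; ring

lemma inv_num_den (q : ℚ) (hq : 0 < q) : q⁻¹.num = (q.den : ℤ) ∧ q⁻¹.den = q.num.natAbs := by
  have hq0 : 0 < q.num := Rat.num_pos.mpr hq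
  have hco : Nat.Coprime (q.den : ℤ).natAbs q.num.natAbs := by
    simpa [Int.natAbs_natCast] using (q.reduced.symm)
  have hinv : q⁻¹ = (((q.den : ℤ)) : ℚ) / ((q.num : ℤ) : ℚ) := by
    rw [Rat.inv_def, Rat.divInt_eq_div]
  constructor
  · rw [hinv]; exact Rat.num_div_eq_of_coprime hq0 hco
  · rw [hinv]
    have := Rat.den_div_eq_of_coprime hq0 hco
    omega

theorem z2_classification_realizability' (a₀ a₁ : ℕ)
    (ha₀ : 1 ≤ a₀) (ha₁ : 1 ≤ a₁) (hne : a₀ ≠ a₁)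
    (π₀ π₁ : ℚ) (hπ₀ : 0 < π₀) (hπ₁ : 0 < π₁)
    (h₀ : ∀ p : ℕ, p.Prime → (p ∣ π₀.num.natAbs ∨ p ∣ π₀.den) → p ∣ a₀ + a₁)
    (h₁ : ∀ p : ℕ, p.Prime → (p ∣ π₁.num.natAbs ∨ p ∣ π₁.den) →
      (p : ℤ) ∣ (a₀ : ℤ) - (a₁ : ℤ)) :
    ∃ N₁ N₂ α₀ α₁ β₀ β₁ : ℕ,
    ((a₀ + a₁ : ℕ) : ℚ) ^ N₁ * π₀ = (α₀ : ℚ) + (α₁ : ℚ) ∧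
    ((a₀ + a₁ : ℕ) : ℚ) ^ N₂ = π₀ * ((β₀ : ℚ) + (β₁ : ℚ)) ∧
    (((a₀ : ℤ) - (a₁ : ℤ) : ℤ) : ℚ) ^ N₁ * π₁ = (α₀ : ℚ) - (α₁ : ℚ) ∧
    (((a₀ : ℤ) - (a₁ : ℤ) : ℤ) : ℚ) ^ N₂ = π₁ * ((β₀ : ℚ) - (β₁ : ℚ)) := by
  set d : ℕ := a₀ + a₁ with hd
  set χ : ℤ := (a₀ : ℤ) - (a₁ : ℤ) with hχ
  have hd2 : 2 ≤ d := by omega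
  have hχ0 : χ ≠ 0 := by rw [hχ]; intro h; apply hne; omega
  have hχd : χ.natAbs < d := by rw [hχ, hd]; omega
  have hpar : Even (d : ℤ) ↔ Even χ := by
    constructor
    · rintro ⟨k, hk⟩
      exact ⟨(a₀ : ℤ) - k, by rw [hχ]; push_cast at hk ⊢; omega⟩
    · rintro ⟨k, hk⟩
      exact ⟨(a₀ : ℤ) - k, by rw [hχ] at hk; push_cast; omega⟩
  obtain ⟨N₁, α₀, α₁, hA1, hB1⟩ := key d χ hd2 hχ0 hχd hpar π₀ π₁ hπ₀ hπ₁ h₀ h₁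
  -- inverse rationals
  obtain ⟨hi0n, hi0d⟩ := inv_num_den π₀ hπ₀
  obtain ⟨hi1n, hi1d⟩ := inv_num_den π₁ hπ₁
  have h₀' : ∀ p : ℕ, p.Prime → (p ∣ (π₀⁻¹).num.natAbs ∨ p ∣ (π₀⁻¹).den) → p ∣ d := by
    intro p hp hpd
    rcases hpd with h | h
    · exact h₀ p hp (Or.inr (by rwa [hi0n, Int.natAbs_natCast] at h))
    · exact h₀ p hp (Or.inl (by rwa [hi0d] at h))
  have h₁' : ∀ p : ℕ, p.Prime → (p ∣ (π₁⁻¹).num.natAbs ∨ p ∣ (π₁⁻¹).den) → (p : ℤ) ∣ χ := by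
    intro p hp hpd
    rcases hpd with h | h
    · exact h₁ p hp (Or.inr (by rwa [hi1n, Int.natAbs_natCast] at h))
    · exact h₁ p hp (Or.inl (by rwa [hi1d] at h))
  obtain ⟨N₂, β₀, β₁, hA2, hB2⟩ := key d χ hd2 hχ0 hχd hpar π₀⁻¹ π₁⁻¹
    (inv_pos.mpr hπ₀) (inv_pos.mpr hπ₁) h₀' h₁'
  refine ⟨N₁, N₂, α₀, α₁, β₀, β₁, ?_, ?_, ?_, ?_⟩
  · exact_mod_cast hA1
  · have := hA2
    field_simp at this
    rw [this]
  · exact hB1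
  · have := hB2
    field_simp at this
    rw [this]


/-- realizability direction of the `ℤ₂` classification. If `a₀, a₁ ≥ 1`,
`a₀ ≠ a₁`, and `(π₀, π₁)` are positive rationals such that every prime dividing the
numerator or denominator of `π₀` divides `d = a₀ + a₁` and every prime dividing the
numerator or denominator of `π₁` divides `χ = a₀ - a₁`, then `(π₀, π₁)` is realizable. -/
theorem z2_classification_realizability (a₀ a₁ : ℕ)
    (ha₀ : 1 ≤ a₀) (ha₁ : 1 ≤ a₁) (hne : a₀ ≠ a₁)
    (π₀ π₁ : ℚ) (hπ₀ : 0 < π₀) (hπ₁ : 0 < π₁)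
    (h₀ : ∀ p : ℕ, p.Prime → (p ∣ π₀.num.natAbs ∨ p ∣ π₀.den) → p ∣ a₀ + a₁)
    (h₁ : ∀ p : ℕ, p.Prime → (p ∣ π₁.num.natAbs ∨ p ∣ π₁.den) →
      (p : ℤ) ∣ (a₀ : ℤ) - (a₁ : ℤ)) :
    Realizable a₀ a₁ π₀ π₁ :=
  z2_classification_realizability' a₀ a₁ ha₀ ha₁ hne π₀ π₁ hπ₀ hπ₁ h₀ h₁
end

section
/- Classification of ℤ₂-symmetric QCA under strong equivalence: Let a₀, a₁ : ℕ with a₀ ≥ 1, a₁ ≥ 1 and a₀ ≠ a₁; set d = a₀ + a₁ and χ = (a₀ : ℤ) − a₁. For positive rationals π₀, π₁ the following are equivalent: (i) the pair (π₀, π₁) is realizable; (ii) every prime dividing the numerator or the denominator of π₀ divides d, and every prime dividing the numerator or the denominator of π₁ divides χ. -/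
lemma aux_dvd_pow_of_forall_prime_dvd : ∀ (n : ℕ), 0 < n → ∀ (c : ℕ),
    (∀ p, p.Prime → p ∣ n → p ∣ c) → n ∣ c ^ n := by
  intro n
  induction n using Nat.strong_induction_on with
  | _ n ih =>
    intro hn c hc
    rcases eq_or_ne n 1 with rfl | h1
    · simpa using one_dvd _
    · obtain ⟨p, pp, pdvd⟩ := Nat.exists_prime_and_dvd h1
      obtain ⟨m, hm⟩ := pdvd
      have hm0 : 0 < m := by
        rcases Nat.eq_zero_or_pos m with rfl | h
        · omega
        · exact h
      have hmn : m < n := by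
        have := pp.two_le
        nlinarith
      have hmc : m ∣ c ^ m := ih m hmn hm0 c fun q hq hqm =>
        hc q hq (hqm.trans ⟨p, by rw [hm]; ring⟩)
      have hpc : p ∣ c := hc p pp ⟨m, hm⟩
      have : n ∣ c ^ (m + 1) := by
        rw [hm, pow_succ, mul_comm (c ^ m) c]
        exact mul_dvd_mul hpc hmc
      exact this.trans (pow_dvd_pow c (by nlinarith [pp.two_le]))

lemma aux_int_dvd_pow (n : ℕ) (hn : 0 < n) (c : ℤ)
    (h : ∀ p : ℕ, p.Prime → p ∣ n → (p : ℤ) ∣ c) {k : ℕ} (hk : n ≤ k) :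
    (n : ℤ) ∣ c ^ k := by
  have h1 : n ∣ c.natAbs ^ n := aux_dvd_pow_of_forall_prime_dvd n hn c.natAbs
    fun p pp hp => Int.natCast_dvd.mp (h p pp hp)
  have h2 : n ∣ (c ^ k).natAbs := by
    rw [Int.natAbs_pow]
    exact h1.trans (pow_dvd_pow _ hk)
  exact Int.dvd_natAbs.mp (Int.natCast_dvd_natCast.mpr h2)

lemma aux_size (e D r : ℚ) (he : 0 < e) (heD : e < D) (hr : 0 < r) :
    ∃ M : ℕ, ∀ N, M ≤ N → e ^ N * r ≤ D ^ N := by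
  have h1 : (1 : ℚ) < D / e := (one_lt_div he).mpr heD
  obtain ⟨M, hM⟩ := pow_unbounded_of_one_lt r h1
  refine ⟨M, fun N hN => ?_⟩
  have h2 : r ≤ (D / e) ^ N := le_trans hM.le (pow_le_pow_right₀ h1.le hN)
  have h3 : e ^ N * r ≤ e ^ N * (D / e) ^ N :=
    mul_le_mul_of_nonneg_left h2 (by positivity)
  calc e ^ N * r ≤ e ^ N * (D / e) ^ N := h3
    _ = D ^ N := by
        rw [div_pow]; field_simp

lemma aux_toNat (x : ℤ) (h : 0 ≤ x) : ((x.toNat : ℕ) : ℚ) = (x : ℚ) := by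
  rw [← Int.toNat_of_nonneg h]
  norm_cast

/-- classification of `ℤ₂`-symmetric QCA under strong equivalence.
For `a₀, a₁ ≥ 1` with `a₀ ≠ a₁` and positive rationals `π₀, π₁`, the pair
`(π₀, π₁)` is realizable iff every prime dividing the numerator or denominator of
`π₀` divides `d = a₀ + a₁` and every prime dividing the numerator or denominator of
`π₁` divides `χ = a₀ - a₁`. -/
theorem z2_classification (a₀ a₁ : ℕ)
    (ha₀ : 1 ≤ a₀) (ha₁ : 1 ≤ a₁) (hne : a₀ ≠ a₁)
    (π₀ π₁ : ℚ) (hπ₀ : 0 < π₀) (hπ₁ : 0 < π₁) :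
    Realizable a₀ a₁ π₀ π₁ ↔
      ((∀ p : ℕ, p.Prime → (p ∣ π₀.num.natAbs ∨ p ∣ π₀.den) → p ∣ a₀ + a₁) ∧
       (∀ p : ℕ, p.Prime → (p ∣ π₁.num.natAbs ∨ p ∣ π₁.den) →
         (p : ℤ) ∣ (a₀ : ℤ) - (a₁ : ℤ))) := by
  have hd2 : 2 ≤ a₀ + a₁ := by omega
  have hχ0 : ((a₀ : ℤ) - (a₁ : ℤ)) ≠ 0 := by
    intro h; apply hne; omega
  have hdQ : (0:ℚ) < ((a₀ + a₁ : ℕ) : ℚ) := by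
    have : (0:ℕ) < a₀ + a₁ := by omega
    exact_mod_cast this
  have hχQ : (((a₀ : ℤ) - (a₁ : ℤ) : ℤ) : ℚ) ≠ 0 := by exact_mod_cast hχ0
  constructor
  · rintro ⟨N₁, N₂, α₀, α₁, β₀, β₁, h1, h2, h3, h4⟩
    constructor
    · intro p pp hp
      rcases hp with hp | hp
      · -- numerator of π₀ divides d^N₂
        have hb0Q : ((β₀:ℚ) + β₁) ≠ 0 := by
          intro h
          rw [h, mul_zero] at h2
          exact (pow_ne_zero _ hdQ.ne') h2
        have hb0 : ((β₀ : ℤ) + (β₁ : ℤ)) ≠ 0 := by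
          intro h; apply hb0Q; exact_mod_cast congrArg (fun z : ℤ => (z : ℚ)) h
        have hb0Q' : (((β₀ : ℤ) + (β₁ : ℤ) : ℤ) : ℚ) ≠ 0 := by push_cast; exact hb0Q
        have key : π₀ = Rat.divInt (((a₀ + a₁ : ℕ) : ℤ) ^ N₂) ((β₀ : ℤ) + (β₁ : ℤ)) := by
          rw [Rat.divInt_eq_div, eq_div_iff hb0Q']
          push_cast
          push_cast at h2
          linarith [h2]
        have hnum : π₀.num ∣ ((a₀ + a₁ : ℕ) : ℤ) ^ N₂ := by
          rw [key]; exact Rat.num_dvd _ hb0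
        have : (p : ℤ) ∣ ((a₀ + a₁ : ℕ) : ℤ) ^ N₂ :=
          dvd_trans (Int.natCast_dvd.mpr hp) hnum
        have : p ∣ (a₀ + a₁) ^ N₂ := by exact_mod_cast this
        exact pp.dvd_of_dvd_pow this
      · -- denominator of π₀ divides d^N₁
        have hB : (((a₀ + a₁ : ℕ) : ℤ) ^ N₁) ≠ 0 := by positivity
        have hBQ : (((a₀ + a₁ : ℕ) : ℚ) ^ N₁) ≠ 0 := pow_ne_zero _ hdQ.ne'
        have hBQ' : ((((a₀ + a₁ : ℕ) : ℤ) ^ N₁ : ℤ) : ℚ) ≠ 0 := by exact_mod_cast hBQ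
        have key : π₀ = Rat.divInt ((α₀ : ℤ) + (α₁ : ℤ)) (((a₀ + a₁ : ℕ) : ℤ) ^ N₁) := by
          rw [Rat.divInt_eq_div, eq_div_iff hBQ']
          push_cast
          push_cast at h1
          linarith [h1]
        have hden : (π₀.den : ℤ) ∣ ((a₀ + a₁ : ℕ) : ℤ) ^ N₁ := by
          rw [key]; exact Rat.den_dvd _ _
        have : (p : ℤ) ∣ ((a₀ + a₁ : ℕ) : ℤ) ^ N₁ :=
          dvd_trans (by exact_mod_cast Int.natCast_dvd_natCast.mpr hp) hden
        have : p ∣ (a₀ + a₁) ^ N₁ := by exact_mod_cast this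
        exact pp.dvd_of_dvd_pow this
    · intro p pp hp
      have ppZ : Prime ((p : ℤ)) := Nat.prime_iff_prime_int.mp pp
      rcases hp with hp | hp
      · have hb0Q : ((β₀:ℚ) - β₁) ≠ 0 := by
          intro h
          rw [h, mul_zero] at h4
          exact (pow_ne_zero _ hχQ) h4
        have hb0Q' : (((β₀ : ℤ) - (β₁ : ℤ) : ℤ) : ℚ) ≠ 0 := by push_cast; exact hb0Q
        have hb0 : ((β₀ : ℤ) - (β₁ : ℤ)) ≠ 0 := fun h => hb0Q' (by rw [h]; norm_num)
        have key : π₁ = Rat.divInt (((a₀ : ℤ) - (a₁ : ℤ)) ^ N₂) ((β₀ : ℤ) - (β₁ : ℤ)) := by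
          rw [Rat.divInt_eq_div, eq_div_iff hb0Q']
          push_cast
          push_cast at h4
          linarith [h4]
        have hnum : π₁.num ∣ ((a₀ : ℤ) - (a₁ : ℤ)) ^ N₂ := by
          rw [key]; exact Rat.num_dvd _ hb0
        exact ppZ.dvd_of_dvd_pow (dvd_trans (Int.natCast_dvd.mpr hp) hnum)
      · have hB : (((a₀ : ℤ) - (a₁ : ℤ)) ^ N₁) ≠ 0 := pow_ne_zero _ hχ0
        have hBQ' : ((((a₀ : ℤ) - (a₁ : ℤ)) ^ N₁ : ℤ) : ℚ) ≠ 0 := by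
          push_cast; exact pow_ne_zero _ (by push_cast at hχQ ⊢; exact hχQ)
        have key : π₁ = Rat.divInt ((α₀ : ℤ) - (α₁ : ℤ)) (((a₀ : ℤ) - (a₁ : ℤ)) ^ N₁) := by
          rw [Rat.divInt_eq_div, eq_div_iff hBQ']
          push_cast
          push_cast at h3
          linarith [h3]
        have hden : (π₁.den : ℤ) ∣ ((a₀ : ℤ) - (a₁ : ℤ)) ^ N₁ := by
          rw [key]; exact Rat.den_dvd _ _
        exact ppZ.dvd_of_dvd_pow
          (dvd_trans (by exact_mod_cast Int.natCast_dvd_natCast.mpr hp) hden)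
  · rintro ⟨h₀, h₁⟩
    unfold Realizable
    have hnum₀ : 0 < π₀.num := Rat.num_pos.mpr hπ₀
    have hnum₁ : 0 < π₁.num := Rat.num_pos.mpr hπ₁
    set χ : ℤ := (a₀ : ℤ) - (a₁ : ℤ) with hχdef
    have hden₀dvd : ∀ k, π₀.den ≤ k → ((π₀.den : ℤ)) ∣ ((a₀ + a₁ : ℕ) : ℤ) ^ k :=
      fun k hk => aux_int_dvd_pow _ π₀.pos _
        (fun p pp hp => Int.natCast_dvd_natCast.mpr (h₀ p pp (Or.inr hp))) hk
    have hnum₀dvd : ∀ k, π₀.num.natAbs ≤ k → π₀.num ∣ ((a₀ + a₁ : ℕ) : ℤ) ^ k := by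
      intro k hk
      have := aux_int_dvd_pow π₀.num.natAbs (Int.natAbs_pos.mpr hnum₀.ne') _
        (fun p pp hp => Int.natCast_dvd_natCast.mpr (h₀ p pp (Or.inl hp))) hk
      rwa [Int.natCast_natAbs, abs_of_pos hnum₀] at this
    have hden₁dvd : ∀ k, π₁.den ≤ k → ((π₁.den : ℤ)) ∣ χ ^ k :=
      fun k hk => aux_int_dvd_pow _ π₁.pos _
        (fun p pp hp => h₁ p pp (Or.inr hp)) hk
    have hnum₁dvd : ∀ k, π₁.num.natAbs ≤ k → π₁.num ∣ χ ^ k := by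
      intro k hk
      have := aux_int_dvd_pow π₁.num.natAbs (Int.natAbs_pos.mpr hnum₁.ne') _
        (fun p pp hp => h₁ p pp (Or.inl hp)) hk
      rwa [Int.natCast_natAbs, abs_of_pos hnum₁] at this
    have hχabs : ((χ.natAbs : ℚ)) = |(χ : ℚ)| := by
      rw [Nat.cast_natAbs, Int.cast_abs]
    have he : (0:ℚ) < (χ.natAbs : ℚ) := by
      have : 0 < χ.natAbs := Int.natAbs_pos.mpr hχ0
      exact_mod_cast this
    have heD : (χ.natAbs : ℚ) < ((a₀ + a₁ : ℕ) : ℚ) := by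
      have : χ.natAbs < a₀ + a₁ := by rw [hχdef]; omega
      exact_mod_cast this
    obtain ⟨M₀, hM₀⟩ := aux_size _ _ (π₁ / π₀) he heD (by positivity)
    obtain ⟨M₁, hM₁⟩ := aux_size _ _ (π₀ / π₁) he heD (by positivity)
    set K : ℕ := π₀.den + π₀.num.natAbs + π₁.den + π₁.num.natAbs with hK
    set N : ℕ := max (max M₀ M₁) K + 1 with hNdef
    have hN1 : 1 ≤ N := by omega
    obtain ⟨w₁, hw₁⟩ := hden₀dvd (N - 1) (by omega)
    obtain ⟨w₂, hw₂⟩ := hnum₀dvd (N - 1) (by omega)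
    obtain ⟨w₃, hw₃⟩ := hden₁dvd (N - 1) (by omega)
    obtain ⟨w₄, hw₄⟩ := hnum₁dvd (N - 1) (by omega)
    have hdN : ((a₀ + a₁ : ℕ) : ℤ) ^ N = ((a₀ + a₁ : ℕ) : ℤ) ^ (N - 1) * ((a₀ + a₁ : ℕ) : ℤ) := by
      conv_lhs => rw [show N = (N - 1) + 1 from by omega]
      rw [pow_succ]
    have hχN : χ ^ N = χ ^ (N - 1) * χ := by
      conv_lhs => rw [show N = (N - 1) + 1 from by omega]
      rw [pow_succ]
    have e1 : (π₀.den : ℤ) * (w₁ * ((a₀ + a₁ : ℕ) : ℤ)) = ((a₀ + a₁ : ℕ) : ℤ) ^ N := by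
      rw [hdN, hw₁]; ring
    have e2 : π₀.num * (w₂ * ((a₀ + a₁ : ℕ) : ℤ)) = ((a₀ + a₁ : ℕ) : ℤ) ^ N := by
      rw [hdN, hw₂]; ring
    have e3 : (π₁.den : ℤ) * (w₃ * χ) = χ ^ N := by
      rw [hχN, hw₃]; ring
    have e4 : π₁.num * (w₄ * χ) = χ ^ N := by
      rw [hχN, hw₄]; ring
    set X : ℤ := π₀.num * (w₁ * ((a₀ + a₁ : ℕ) : ℤ)) with hXdef
    set Y : ℤ := π₁.num * (w₃ * χ) with hYdef
    set X' : ℤ := (π₀.den : ℤ) * (w₂ * ((a₀ + a₁ : ℕ) : ℤ)) with hX'def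
    set Y' : ℤ := (π₁.den : ℤ) * (w₄ * χ) with hY'def
    have hden₀Q : (π₀.den : ℚ) ≠ 0 := by
      have := π₀.den_nz; exact_mod_cast this
    have hden₁Q : (π₁.den : ℚ) ≠ 0 := by
      have := π₁.den_nz; exact_mod_cast this
    have hq0 : (π₀.num : ℚ) = π₀ * (π₀.den : ℚ) := by
      have h := Rat.num_div_den π₀
      rw [div_eq_iff hden₀Q] at h
      exact h
    have hq1 : (π₁.num : ℚ) = π₁ * (π₁.den : ℚ) := by
      have h := Rat.num_div_den π₁
      rw [div_eq_iff hden₁Q] at h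
      exact h
    -- cast identities
    have e1Q : (π₀.den : ℚ) * ((w₁ : ℚ) * ((a₀ + a₁ : ℕ) : ℚ)) = ((a₀ + a₁ : ℕ) : ℚ) ^ N := by
      exact_mod_cast congrArg (fun z : ℤ => (z : ℚ)) e1
    have e2Q : (π₀.num : ℚ) * ((w₂ : ℚ) * ((a₀ + a₁ : ℕ) : ℚ)) = ((a₀ + a₁ : ℕ) : ℚ) ^ N := by
      exact_mod_cast congrArg (fun z : ℤ => (z : ℚ)) e2
    have e3Q : (π₁.den : ℚ) * ((w₃ : ℚ) * (χ : ℚ)) = (χ : ℚ) ^ N := by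
      exact_mod_cast congrArg (fun z : ℤ => (z : ℚ)) e3
    have e4Q : (π₁.num : ℚ) * ((w₄ : ℚ) * (χ : ℚ)) = (χ : ℚ) ^ N := by
      exact_mod_cast congrArg (fun z : ℤ => (z : ℚ)) e4
    have hX : (X : ℚ) = ((a₀ + a₁ : ℕ) : ℚ) ^ N * π₀ := by
      rw [hXdef, ← e1Q]
      push_cast
      linear_combination ((w₁ : ℚ) * ((a₀ : ℚ) + (a₁ : ℚ))) * hq0
    have hY : (Y : ℚ) = (χ : ℚ) ^ N * π₁ := by
      rw [hYdef, ← e3Q]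
      push_cast
      linear_combination ((w₃ : ℚ) * ((χ : ℤ) : ℚ)) * hq1
    have hX' : (X' : ℚ) * π₀ = ((a₀ + a₁ : ℕ) : ℚ) ^ N := by
      rw [hX'def, ← e2Q]
      push_cast
      linear_combination (-(w₂ : ℚ) * ((a₀ : ℚ) + (a₁ : ℚ))) * hq0
    have hY' : (Y' : ℚ) * π₁ = (χ : ℚ) ^ N := by
      rw [hY'def, ← e4Q]
      push_cast
      linear_combination (-(w₄ : ℚ) * ((χ : ℤ) : ℚ)) * hq1
    -- size bounds
    have hs1 : (χ.natAbs : ℚ) ^ N * π₁ ≤ ((a₀ + a₁ : ℕ) : ℚ) ^ N * π₀ := by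
      have h := hM₀ N (by omega)
      calc (χ.natAbs : ℚ) ^ N * π₁ = ((χ.natAbs : ℚ) ^ N * (π₁ / π₀)) * π₀ := by
            field_simp
        _ ≤ ((a₀ + a₁ : ℕ) : ℚ) ^ N * π₀ := mul_le_mul_of_nonneg_right h hπ₀.le
    have hs2 : (χ.natAbs : ℚ) ^ N * π₀ ≤ ((a₀ + a₁ : ℕ) : ℚ) ^ N * π₁ := by
      have h := hM₁ N (by omega)
      calc (χ.natAbs : ℚ) ^ N * π₀ = ((χ.natAbs : ℚ) ^ N * (π₀ / π₁)) * π₁ := by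
            field_simp
        _ ≤ ((a₀ + a₁ : ℕ) : ℚ) ^ N * π₁ := mul_le_mul_of_nonneg_right h hπ₁.le
    have hYX : |Y| ≤ X := by
      have : |(Y : ℚ)| ≤ (X : ℚ) := by
        rw [hY, hX, abs_mul, abs_pow, abs_of_pos hπ₁, ← hχabs]
        exact hs1
      exact_mod_cast this
    have hY'X' : |Y'| ≤ X' := by
      have hXv : (X' : ℚ) = ((a₀ + a₁ : ℕ) : ℚ) ^ N / π₀ := by
        rw [eq_div_iff hπ₀.ne']; exact hX'
      have hYv : (Y' : ℚ) = (χ : ℚ) ^ N / π₁ := by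
        rw [eq_div_iff hπ₁.ne']; exact hY'
      have : |(Y' : ℚ)| ≤ (X' : ℚ) := by
        rw [hXv, hYv, abs_div, abs_pow, abs_of_pos hπ₁, ← hχabs]
        rw [div_le_div_iff₀ hπ₁ hπ₀]
        exact hs2
      exact_mod_cast this
    -- parity
    have hparXY : (2 : ℤ) ∣ X - Y ∧ (2 : ℤ) ∣ X' - Y' := by
      by_cases h2d : 2 ∣ a₀ + a₁
      · have h2dZ : (2 : ℤ) ∣ ((a₀ + a₁ : ℕ) : ℤ) := by exact_mod_cast h2d
        have h2χ : (2 : ℤ) ∣ χ := by rw [hχdef]; omega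
        constructor
        · exact dvd_sub ((h2dZ.mul_left w₁).mul_left _) ((h2χ.mul_left w₃).mul_left _)
        · exact dvd_sub ((h2dZ.mul_left w₂).mul_left _) ((h2χ.mul_left w₄).mul_left _)
      · have hoddd : Odd ((a₀ + a₁ : ℕ) : ℤ) := by
          rw [Int.odd_iff]; omega
        have hoddχ : Odd χ := by
          rw [Int.odd_iff, hχdef]; omega
        have hodd_num₀ : Odd π₀.num := by
          rcases Int.even_or_odd π₀.num with he | ho
          · exact absurd (h₀ 2 Nat.prime_two (Or.inl he.natAbs.two_dvd)) h2d
          · exact ho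
        have hodd_den₀ : Odd ((π₀.den : ℕ) : ℤ) := by
          rcases Int.even_or_odd ((π₀.den : ℕ) : ℤ) with he | ho
          · exact absurd (h₀ 2 Nat.prime_two (Or.inr he.natAbs.two_dvd)) h2d
          · exact ho
        have h2χfalse : ¬ (2 : ℤ) ∣ χ := by
          intro h; rw [hχdef] at h; omega
        have hodd_num₁ : Odd π₁.num := by
          rcases Int.even_or_odd π₁.num with he | ho
          · exact absurd (h₁ 2 Nat.prime_two (Or.inl he.natAbs.two_dvd)) h2χfalse
          · exact ho
        have hodd_den₁ : Odd ((π₁.den : ℕ) : ℤ) := by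
          rcases Int.even_or_odd ((π₁.den : ℕ) : ℤ) with he | ho
          · exact absurd (h₁ 2 Nat.prime_two (Or.inr he.natAbs.two_dvd)) h2χfalse
          · exact ho
        have ht₁ : Odd (w₁ * ((a₀ + a₁ : ℕ) : ℤ)) := (Int.odd_mul.mp (e1 ▸ hoddd.pow)).2
        have ht₂ : Odd (w₂ * ((a₀ + a₁ : ℕ) : ℤ)) := (Int.odd_mul.mp (e2 ▸ hoddd.pow)).2
        have ht₃ : Odd (w₃ * χ) := (Int.odd_mul.mp (e3 ▸ hoddχ.pow)).2
        have ht₄ : Odd (w₄ * χ) := (Int.odd_mul.mp (e4 ▸ hoddχ.pow)).2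
        constructor
        · exact ((Int.odd_mul.mpr ⟨hodd_num₀, ht₁⟩).sub_odd
            (Int.odd_mul.mpr ⟨hodd_num₁, ht₃⟩)).two_dvd
        · exact ((Int.odd_mul.mpr ⟨hodd_den₀, ht₂⟩).sub_odd
            (Int.odd_mul.mpr ⟨hodd_den₁, ht₄⟩)).two_dvd
    obtain ⟨hpar, hpar'⟩ := hparXY
    obtain ⟨u, hu⟩ := hpar
    obtain ⟨v, hv⟩ : (2 : ℤ) ∣ X + Y := ⟨u + Y, by omega⟩
    obtain ⟨u', hu'⟩ := hpar'
    obtain ⟨v', hv'⟩ : (2 : ℤ) ∣ X' + Y' := ⟨u' + Y', by omega⟩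
    have habsY := abs_le.mp hYX
    have habsY' := abs_le.mp hY'X'
    have hv0 : 0 ≤ v := by omega
    have hu0 : 0 ≤ u := by omega
    have hv'0 : 0 ≤ v' := by omega
    have hu'0 : 0 ≤ u' := by omega
    refine ⟨N, N, v.toNat, u.toNat, v'.toNat, u'.toNat, ?_, ?_, ?_, ?_⟩
    · rw [← hX, show X = v + u by omega, aux_toNat v hv0, aux_toNat u hu0]
      push_cast
      ring
    · rw [← hX', show X' = v' + u' by omega, aux_toNat v' hv'0, aux_toNat u' hu'0]
      push_cast
      ring
    · rw [← hY, show Y = v - u by omega, aux_toNat v hv0, aux_toNat u hu0]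
      push_cast
      ring
    · rw [← hY', show Y' = v' - u' by omega, aux_toNat v' hv'0, aux_toNat u' hu'0]
      push_cast
      ring
end
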